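/- arXiv:2201.09085 — 7 statements merged into one kernel-verified Lean document; each statement's English description precedes it below -/
import Mathlib

section
/- For any complex number s with Re s > 0 and nonnegative reals L, R, D with L + R + D > 0, the modulus of the admittance is bounded by (|s|/Re s) times the admittance at |s|: |ρ_s| ≤ (|s| / Re s) · ρ_{|s|}, where ρ_t = t / (L t² + R t + D) for t > 0. -/
/-! Writing `d = L s² + R s + D`, one has `Re (d · conj s) = Re s · (L |s|² + D) + R |s|²`, and
`R |s|² ≥ R |s| Re s`. Hence `Re s · (L |s|² + R |s| + D) ≤ Re (d · conj s) ≤ |d| |s|`, which is the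
claim after dividing by `|d| · Re s · (L |s|² + R |s| + D)`. -/

open ComplexConjugate

namespace Complex

theorem re_quadratic_mul_conj (L R D : ℝ) (s : ℂ) :
    (((L : ℂ) * s ^ 2 + (R : ℂ) * s + (D : ℂ)) * conj s).re =
      s.re * (L * ‖s‖ ^ 2 + D) + R * ‖s‖ ^ 2 := by
  rw [Complex.sq_norm, normSq_apply]
  simp only [mul_re, mul_im, add_re, add_im, ofReal_re, ofReal_im, conj_re, conj_im, pow_two]
  ring

theorem re_mul_quadratic_norm_le (L R D : ℝ) (hR : 0 ≤ R) (s : ℂ) :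
    s.re * (L * ‖s‖ ^ 2 + R * ‖s‖ + D) ≤
      ‖(L : ℂ) * s ^ 2 + (R : ℂ) * s + (D : ℂ)‖ * ‖s‖ :=
  calc s.re * (L * ‖s‖ ^ 2 + R * ‖s‖ + D)
      = s.re * (L * ‖s‖ ^ 2 + D) + R * (‖s‖ * s.re) := by ring
    _ ≤ s.re * (L * ‖s‖ ^ 2 + D) + R * ‖s‖ ^ 2 := by
        rw [sq]
        gcongr
        exact re_le_norm s
    _ = (((L : ℂ) * s ^ 2 + (R : ℂ) * s + (D : ℂ)) * conj s).re :=
        (re_quadratic_mul_conj L R D s).symm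
    _ ≤ ‖(L : ℂ) * s ^ 2 + (R : ℂ) * s + (D : ℂ)‖ * ‖s‖ := by
        rw [← norm_conj s, ← norm_mul]
        exact re_le_norm _

end Complex

theorem quadratic_pos_of_nonneg_coeffs {L R D t : ℝ} (hL : 0 ≤ L) (hR : 0 ≤ R) (hD : 0 ≤ D)
    (hsum : 0 < L + R + D) (ht : 0 < t) : 0 < L * t ^ 2 + R * t + D := by
  rcases (show 0 < L ∨ 0 < R ∨ 0 < D by contrapose! hsum; linarith) with h | h | h <;> positivity

/-- |ρ_s| ≤ (|s|/Re s) · ρ_{|s|}. -/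
theorem admittance_abs_le (s : ℂ) (hs : 0 < s.re) (L R D : ℝ)
    (hL : 0 ≤ L) (hR : 0 ≤ R) (hD : 0 ≤ D) (hsum : 0 < L + R + D) :
    ‖s / ((L : ℂ) * s ^ 2 + (R : ℂ) * s + (D : ℂ))‖ ≤
      (‖s‖ / s.re) *
        (‖s‖ / (L * (‖s‖) ^ 2 + R * ‖s‖ + D)) := by
  set d : ℂ := (L : ℂ) * s ^ 2 + (R : ℂ) * s + (D : ℂ)
  have hs_norm : 0 < ‖s‖ := hs.trans_le (Complex.re_le_norm s)
  have hQ := quadratic_pos_of_nonneg_coeffs hL hR hD hsum hs_norm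
  have key : s.re * (L * ‖s‖ ^ 2 + R * ‖s‖ + D) ≤ ‖d‖ * ‖s‖ :=
    Complex.re_mul_quadratic_norm_le L R D hR s
  have hd : 0 < ‖d‖ := pos_of_mul_pos_left ((mul_pos hs hQ).trans_le key) hs_norm.le
  rw [norm_div, div_mul_div_comm, div_le_div_iff₀ hd (mul_pos hs hQ)]
  nlinarith
end

section
/- For any complex number s with Re s > 0 and nonnegative reals L, R, D with L + R + D > 0, the modulus of the admittance is controlled by its real part: |ρ_s| ≤ (|s| / Re s) · Re ρ_s. -/
/-!
With `c = Re s / ‖s‖ = cos (arg s)`, the set `{w | c ‖w‖ ≤ Re w}` is the closed sector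
`|arg w| ≤ |arg s|`. It is a convex cone (as `c ≥ 0`), stable under `w ↦ w⁻¹ = conj w / ‖w‖²`,
and contains `1`, `s` and `s⁻¹`. Hence it contains `1 / ρ_s = L s + R + D s⁻¹` and therefore
`ρ_s` itself, which is the claimed inequality after multiplying by `‖s‖ / Re s`.
-/

namespace Complex

def closedSector (c : ℝ) : Set ℂ := {w | c * ‖w‖ ≤ w.re}

variable {c : ℝ} {w z : ℂ}

theorem mem_closedSector : w ∈ closedSector c ↔ c * ‖w‖ ≤ w.re := Iff.rfl

theorem add_mem_closedSector (hc : 0 ≤ c) (hw : w ∈ closedSector c) (hz : z ∈ closedSector c) :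
    w + z ∈ closedSector c := by
  rw [mem_closedSector] at *
  calc c * ‖w + z‖ ≤ c * (‖w‖ + ‖z‖) := by gcongr; exact norm_add_le w z
    _ ≤ (w + z).re := by rw [add_re]; linarith

theorem ofReal_mul_mem_closedSector {a : ℝ} (ha : 0 ≤ a) (hw : w ∈ closedSector c) :
    (a : ℂ) * w ∈ closedSector c := by
  rw [mem_closedSector] at *
  rw [norm_mul, norm_real, Real.norm_of_nonneg ha, re_ofReal_mul, mul_left_comm]
  exact mul_le_mul_of_nonneg_left hw ha

theorem inv_mem_closedSector (hw : w ∈ closedSector c) : w⁻¹ ∈ closedSector c := by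
  rw [mem_closedSector] at *
  rw [norm_inv, inv_re, normSq_eq_norm_sq]
  rcases eq_or_ne ‖w‖ 0 with h | h
  · simp [h]
  · calc c * ‖w‖⁻¹ = c * ‖w‖ / ‖w‖ ^ 2 := by field_simp
      _ ≤ w.re / ‖w‖ ^ 2 := by gcongr

theorem one_mem_closedSector (hc : c ≤ 1) : (1 : ℂ) ∈ closedSector c := by
  simpa [mem_closedSector] using hc

theorem self_mem_closedSector (s : ℂ) : s ∈ closedSector (s.re / ‖s‖) := by
  rw [mem_closedSector]
  rcases eq_or_ne ‖s‖ 0 with h | h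
  · simp [norm_eq_zero.mp h]
  · rw [div_mul_cancel₀ _ h]

end Complex

open Complex in
theorem admittance_abs_le_re_general (s : ℂ) (hs : 0 < s.re) (L R D : ℝ)
    (hL : 0 ≤ L) (hR : 0 ≤ R) (hD : 0 ≤ D) :
    ‖s / ((L : ℂ) * s ^ 2 + (R : ℂ) * s + (D : ℂ))‖ ≤
      (‖s‖ / s.re) * (s / ((L : ℂ) * s ^ 2 + (R : ℂ) * s + (D : ℂ))).re := by
  have hs0 : s ≠ 0 := fun h => by simp [h] at hs
  have hnorm : 0 < ‖s‖ := norm_pos_iff.mpr hs0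
  set c := s.re / ‖s‖
  have hc : 0 ≤ c := by positivity
  have hc1 : c ≤ 1 := div_le_one_of_le₀ (re_le_norm s) hnorm.le
  have hs_mem := self_mem_closedSector s
  have hrecip : ((L : ℂ) * s ^ 2 + R * s + D) / s = L * s + R * 1 + D * s⁻¹ := by
    field_simp
  have hρ : s / ((L : ℂ) * s ^ 2 + R * s + D) ∈ closedSector c := by
    rw [← inv_div, hrecip]
    refine inv_mem_closedSector (add_mem_closedSector hc (add_mem_closedSector hc ?_ ?_) ?_)
    · exact ofReal_mul_mem_closedSector hL hs_mem
    · exact ofReal_mul_mem_closedSector hR (one_mem_closedSector hc1)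
    · exact ofReal_mul_mem_closedSector hD (inv_mem_closedSector hs_mem)
  calc ‖s / ((L : ℂ) * s ^ 2 + R * s + D)‖
      = ‖s‖ / s.re * (c * ‖s / ((L : ℂ) * s ^ 2 + R * s + D)‖) := by
        simp only [c]; field_simp
    _ ≤ ‖s‖ / s.re * (s / ((L : ℂ) * s ^ 2 + R * s + D)).re := by gcongr; exact hρ

/-- |ρ_s| ≤ (|s|/Re s) · Re ρ_s. -/
theorem admittance_abs_le_re (s : ℂ) (hs : 0 < s.re) (L R D : ℝ)
    (hL : 0 ≤ L) (hR : 0 ≤ R) (hD : 0 ≤ D) (hsum : 0 < L + R + D) :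
    ‖s / ((L : ℂ) * s ^ 2 + (R : ℂ) * s + (D : ℂ))‖ ≤
      (‖s‖ / s.re) * (s / ((L : ℂ) * s ^ 2 + (R : ℂ) * s + (D : ℂ))).re :=
  admittance_abs_le_re_general s hs L R D hL hR hD
end

section
/- For a complex number s with Re s > 0 and nonnegative reals L, R, D with L + R + D > 0, Re(1/ρ_s) ≥ (Re s / |s|) · (1/ρ_{|s|}), where ρ_s = s/(L s² + R s + D) and ρ_{|s|} = |s|/(L|s|² + R|s| + D). -/
open Complex

-- Kept over the denominator `normSq s`, so that it also holds at `s = 0` (both sides `0`).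
lemma Complex.re_quadratic_div_self (s : ℂ) (L R D : ℝ) :
    ((L * s ^ 2 + R * s + D) / s).re =
      (L * s.re * normSq s + R * normSq s + D * s.re) / normSq s := by
  rw [div_re, ← add_div]
  congr 1
  simp only [add_re, add_im, mul_re, mul_im, ofReal_re, ofReal_im, pow_two, normSq_apply]
  ring

theorem admittance_inv_re_ge_general (s : ℂ) (L R D : ℝ)
    (hR : 0 ≤ R) :
    (s.re / ‖s‖) *
        (1 / (‖s‖ / (L * (‖s‖) ^ 2 + R * ‖s‖ + D))) ≤
      (1 / (s / ((L : ℂ) * s ^ 2 + (R : ℂ) * s + (D : ℂ)))).re := by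
  -- the two sides differ by `R ‖s‖ (‖s‖ - Re s) / ‖s‖²`
  have hgap : 0 ≤ R * ‖s‖ * (‖s‖ - s.re) :=
    mul_nonneg (mul_nonneg hR (norm_nonneg s)) (sub_nonneg.2 (re_le_norm s))
  calc (s.re / ‖s‖) * (1 / (‖s‖ / (L * ‖s‖ ^ 2 + R * ‖s‖ + D)))
      = s.re * (L * ‖s‖ ^ 2 + R * ‖s‖ + D) / ‖s‖ ^ 2 := by
        rw [one_div_div, div_mul_div_comm, sq]
    _ ≤ (L * s.re * ‖s‖ ^ 2 + R * ‖s‖ ^ 2 + D * s.re) / ‖s‖ ^ 2 :=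
        div_le_div_of_nonneg_right (by linarith) (sq_nonneg _)
    _ = _ := by rw [one_div_div, re_quadratic_div_self, normSq_eq_norm_sq]

/-- Re(1/ρ_s) ≥ (Re s/|s|)·(1/ρ_{|s|}). -/
theorem admittance_inv_re_ge (s : ℂ) (hs : 0 < s.re) (L R D : ℝ)
    (hL : 0 ≤ L) (hR : 0 ≤ R) (hD : 0 ≤ D) (hsum : 0 < L + R + D) :
    (s.re / ‖s‖) *
        (1 / (‖s‖ / (L * (‖s‖) ^ 2 + R * ‖s‖ + D))) ≤
      (1 / (s / ((L : ℂ) * s ^ 2 + (R : ℂ) * s + (D : ℂ)))).re :=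
  admittance_inv_re_ge_general s L R D hR
end

section
/- Let s ∈ ℂ with Re s > 0 and let ρ_s(x,y) = s/(L_{xy}s² + R_{xy}s + D_{xy}) for finitely many neighbors y of a vertex x, with L_{xy}, R_{xy}, D_{xy} ≥ 0 not all zero. Then |Σ_y ρ_s(x,y)| ≥ (Re s / |s|) · Σ_y |ρ_s(x,y)|. -/
/-!
Dividing numerator and denominator by `s` writes `ρ = (L s + R + D s⁻¹)⁻¹`.
With `c = Re s / |s|`, the sector `{w | c |w| ≤ Re w}` is a convex cone that is stable
under inversion and contains `s`, `1` and hence `s⁻¹`; so every `ρ(y)` lies in it.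
Summing `c |ρ(y)| ≤ Re ρ(y)` and using `Re ≤ |·|` gives the claim.
-/

namespace Complex

def reSector (c : ℝ) : Set ℂ := {w | c * ‖w‖ ≤ w.re}

variable {c : ℝ} {z w : ℂ}

theorem add_mem_reSector (hc : 0 ≤ c) (hz : z ∈ reSector c) (hw : w ∈ reSector c) :
    z + w ∈ reSector c :=
  calc c * ‖z + w‖ ≤ c * ‖z‖ + c * ‖w‖ := by
        rw [← mul_add]; exact mul_le_mul_of_nonneg_left (norm_add_le z w) hc
    _ ≤ (z + w).re := by rw [add_re]; exact add_le_add hz hw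

theorem ofReal_mul_mem_reSector {r : ℝ} (hr : 0 ≤ r) (hz : z ∈ reSector c) :
    (r : ℂ) * z ∈ reSector c := by
  change c * ‖(r : ℂ) * z‖ ≤ ((r : ℂ) * z).re
  rw [norm_mul, Complex.norm_of_nonneg hr, re_ofReal_mul, mul_left_comm]
  exact mul_le_mul_of_nonneg_left hz hr

theorem inv_mem_reSector (hz : z ∈ reSector c) : z⁻¹ ∈ reSector c := by
  rcases eq_or_ne z 0 with rfl | hz0
  · simp [reSector]
  have hnorm : 0 < ‖z‖ := norm_pos_iff.mpr hz0
  change c * ‖z⁻¹‖ ≤ z⁻¹.re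
  rw [norm_inv, inv_re, normSq_eq_norm_sq, ← div_eq_mul_inv, le_div_iff₀ (by positivity)]
  calc c * ‖z‖⁻¹ * ‖z‖ ^ 2 = c * ‖z‖ := by field_simp
    _ ≤ z.re := hz

theorem one_mem_reSector (hc : c ≤ 1) : (1 : ℂ) ∈ reSector c := by
  simpa [reSector] using hc

theorem self_mem_reSector (hz : z ≠ 0) : z ∈ reSector (z.re / ‖z‖) := by
  change z.re / ‖z‖ * ‖z‖ ≤ z.re
  rw [div_mul_cancel₀ _ (norm_ne_zero_iff.mpr hz)]

theorem div_quadratic_mem_reSector {s : ℂ} (hs : 0 < s.re) {L R D : ℝ} (hL : 0 ≤ L)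
    (hR : 0 ≤ R) (hD : 0 ≤ D) :
    s / ((L : ℂ) * s ^ 2 + (R : ℂ) * s + (D : ℂ)) ∈ reSector (s.re / ‖s‖) := by
  have hs0 : s ≠ 0 := fun h => by simp [h] at hs
  have hc : 0 ≤ s.re / ‖s‖ := by positivity
  have hself := self_mem_reSector hs0
  have hone : (1 : ℂ) ∈ reSector (s.re / ‖s‖) :=
    one_mem_reSector ((div_le_one (norm_pos_iff.mpr hs0)).mpr (re_le_norm s))
  have hinv :
      s / ((L : ℂ) * s ^ 2 + (R : ℂ) * s + (D : ℂ)) = (L * s + R * 1 + D * s⁻¹)⁻¹ := by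
    rw [← inv_div]
    congr 1
    field_simp
  rw [hinv]
  exact inv_mem_reSector <| add_mem_reSector hc
    (add_mem_reSector hc (ofReal_mul_mem_reSector hL hself) (ofReal_mul_mem_reSector hR hone))
    (ofReal_mul_mem_reSector hD (inv_mem_reSector hself))

end Complex

open Finset in
theorem abs_sum_admittance_ge_general (s : ℂ) (hs : 0 < s.re) {ι : Type*} [Fintype ι]
    (L R D : ι → ℝ) (hL : ∀ y, 0 ≤ L y) (hR : ∀ y, 0 ≤ R y) (hD : ∀ y, 0 ≤ D y) :
    (s.re / ‖s‖) *
        ∑ y, ‖s / ((L y : ℂ) * s ^ 2 + (R y : ℂ) * s + (D y : ℂ))‖ ≤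
      ‖∑ y, s / ((L y : ℂ) * s ^ 2 + (R y : ℂ) * s + (D y : ℂ))‖ := by
  rw [mul_sum]
  refine (sum_le_sum fun y _ =>
    Complex.div_quadratic_mem_reSector hs (hL y) (hR y) (hD y)).trans ?_
  rw [← Complex.re_sum]
  exact Complex.re_le_norm _

open Finset in
/-- for a finite family of admittances at a vertex,
|Σ_y ρ_s(x,y)| ≥ (Re s/|s|)·Σ_y |ρ_s(x,y)|. -/
theorem abs_sum_admittance_ge (s : ℂ) (hs : 0 < s.re) {ι : Type*} [Fintype ι]
    (L R D : ι → ℝ) (hL : ∀ y, 0 ≤ L y) (hR : ∀ y, 0 ≤ R y) (hD : ∀ y, 0 ≤ D y)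
    (hsum : ∀ y, 0 < L y + R y + D y) :
    (s.re / ‖s‖) *
        ∑ y, ‖s / ((L y : ℂ) * s ^ 2 + (R y : ℂ) * s + (D y : ℂ))‖ ≤
      ‖∑ y, s / ((L y : ℂ) * s ^ 2 + (R y : ℂ) * s + (D y : ℂ))‖ :=
  abs_sum_admittance_ge_general s hs L R D hL hR hD
end

section
/- Under the assumptions of a finite set of edge admittances at a vertex x, the complex transition weights p_s(x,y) = ρ_s(x,y)/Σ_z ρ_s(x,z) satisfy |p_s(x,y)| ≤ (|s|/Re s) · p̌_s(x,y), where p̌_s(x,y) = |ρ_s(x,y)| / Σ_z |ρ_s(x,z)| is a stochastic kernel. -/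
/-!
The admittance `ρ = s / (L s² + R s + D)` is the inverse of `L s + R + D / s`, a nonnegative
combination of `s`, `1` and `s⁻¹`. All three lie in the set of those `w` with
`Re s · |w| ≤ |s| · Re w`, which is closed under nonnegative combinations and under inversion;
hence `ρ` lies in it too. Summing `Re s · |ρ z| ≤ |s| · Re ρ z` over `z` gives
`Re s · Σ |ρ z| ≤ |s| · |Σ ρ z|`, and the bound on the transition weights follows by dividing.
-/

namespace Complex

/-- For `0 ≤ Re s`, the closed sector `|arg w| ≤ |arg s|`. -/
def sector (s : ℂ) : Set ℂ := {w | s.re * ‖w‖ ≤ ‖s‖ * w.re}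

variable {s v w : ℂ}

theorem mem_sector : w ∈ sector s ↔ s.re * ‖w‖ ≤ ‖s‖ * w.re := Iff.rfl

theorem self_mem_sector : s ∈ sector s := mem_sector.mpr (mul_comm _ _).le

theorem one_mem_sector : 1 ∈ sector s := by
  simpa [mem_sector] using re_le_norm s

theorem add_mem_sector (hs : 0 ≤ s.re) (hv : v ∈ sector s) (hw : w ∈ sector s) :
    v + w ∈ sector s := by
  rw [mem_sector, add_re, mul_add] at *
  nlinarith [mul_le_mul_of_nonneg_left (norm_add_le v w) hs]

theorem real_smul_mem_sector {c : ℝ} (hc : 0 ≤ c) (hw : w ∈ sector s) :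
    (c : ℂ) * w ∈ sector s := by
  rw [mem_sector, norm_mul, norm_real, Real.norm_of_nonneg hc, re_ofReal_mul] at *
  nlinarith [mul_le_mul_of_nonneg_left hw hc]

theorem inv_mem_sector (hw : w ∈ sector s) : w⁻¹ ∈ sector s := by
  rw [mem_sector, norm_inv, inv_re, normSq_eq_norm_sq] at *
  rcases eq_or_ne w 0 with rfl | hw0
  · simp
  have hw' : ‖w‖ ≠ 0 := norm_ne_zero_iff.mpr hw0
  calc s.re * ‖w‖⁻¹ = s.re * ‖w‖ / ‖w‖ ^ 2 := by field_simp
    _ ≤ ‖s‖ * w.re / ‖w‖ ^ 2 := by gcongr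
    _ = ‖s‖ * (w.re / ‖w‖ ^ 2) := mul_div_assoc _ _ _

theorem sum_norm_le_of_forall_mem_sector {ι : Type*} (t : Finset ι) {ρ : ι → ℂ}
    (hρ : ∀ z ∈ t, ρ z ∈ sector s) :
    s.re * ∑ z ∈ t, ‖ρ z‖ ≤ ‖s‖ * ‖∑ z ∈ t, ρ z‖ :=
  calc s.re * ∑ z ∈ t, ‖ρ z‖ = ∑ z ∈ t, s.re * ‖ρ z‖ := Finset.mul_sum _ _ _
    _ ≤ ∑ z ∈ t, ‖s‖ * (ρ z).re := Finset.sum_le_sum hρ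
    _ = ‖s‖ * (∑ z ∈ t, ρ z).re := by rw [← Finset.mul_sum, re_sum]
    _ ≤ ‖s‖ * ‖∑ z ∈ t, ρ z‖ := by gcongr; exact re_le_norm _

theorem norm_div_sum_le_of_forall_mem_sector {ι : Type*} [Fintype ι] (hs : 0 < s.re)
    {ρ : ι → ℂ} (hρ : ∀ z, ρ z ∈ sector s) (y : ι) :
    ‖ρ y / ∑ z, ρ z‖ ≤ ‖s‖ / s.re * (‖ρ y‖ / ∑ z, ‖ρ z‖) := by
  rw [norm_div]
  rcases (Finset.sum_nonneg fun z _ ↦ norm_nonneg (ρ z)).eq_or_lt' with hS | hS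
  · have : ρ y = 0 := norm_eq_zero.mp <|
      (Finset.sum_eq_zero_iff_of_nonneg fun z _ ↦ norm_nonneg (ρ z)).mp hS y (Finset.mem_univ y)
    simp [this]
  have key := sum_norm_le_of_forall_mem_sector Finset.univ fun z _ ↦ hρ z
  have hT : 0 < ‖∑ z, ρ z‖ := by
    by_contra! h
    nlinarith [norm_nonneg (∑ z, ρ z), norm_nonneg s]
  rw [div_mul_div_comm, div_le_div_iff₀ hT (by positivity)]
  nlinarith [mul_le_mul_of_nonneg_left key (norm_nonneg (ρ y))]

theorem div_quadratic_mem_sector (hs : 0 ≤ s.re) {L R D : ℝ} (hL : 0 ≤ L) (hR : 0 ≤ R)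
    (hD : 0 ≤ D) : s / (L * s ^ 2 + R * s + D) ∈ sector s := by
  rcases eq_or_ne s 0 with rfl | hs0
  · simp [mem_sector]
  have : (L * s ^ 2 + R * s + D) / s = L * s + R * 1 + D * s⁻¹ := by field_simp
  rw [← inv_div, this]
  exact inv_mem_sector <| add_mem_sector hs
    (add_mem_sector hs (real_smul_mem_sector hL self_mem_sector)
      (real_smul_mem_sector hR one_mem_sector))
    (real_smul_mem_sector hD (inv_mem_sector self_mem_sector))

end Complex

open Finset in
theorem abs_transition_le_check_general (s : ℂ) (hs : 0 < s.re) {ι : Type*} [Fintype ι]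
    (L R D : ι → ℝ) (hL : ∀ y, 0 ≤ L y) (hR : ∀ y, 0 ≤ R y) (hD : ∀ y, 0 ≤ D y)
    (y : ι) :
    ‖((s / ((L y : ℂ) * s ^ 2 + (R y : ℂ) * s + (D y : ℂ))) /
        ∑ z, s / ((L z : ℂ) * s ^ 2 + (R z : ℂ) * s + (D z : ℂ)))‖ ≤
      (‖s‖ / s.re) *
        (‖(s / ((L y : ℂ) * s ^ 2 + (R y : ℂ) * s + (D y : ℂ)))‖ /
          ∑ z, ‖(s / ((L z : ℂ) * s ^ 2 + (R z : ℂ) * s + (D z : ℂ)))‖) :=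
  Complex.norm_div_sum_le_of_forall_mem_sector hs
    (fun z ↦ Complex.div_quadratic_mem_sector hs.le (hL z) (hR z) (hD z)) y

open Finset in
/-- |p_s(x,y)| ≤ (|s|/Re s)·p̌_s(x,y), where
p_s(x,y) = ρ_s(x,y)/Σ_z ρ_s(x,z) and p̌_s(x,y) = |ρ_s(x,y)|/Σ_z |ρ_s(x,z)|. -/
theorem abs_transition_le_check (s : ℂ) (hs : 0 < s.re) {ι : Type*} [Fintype ι]
    (L R D : ι → ℝ) (hL : ∀ y, 0 ≤ L y) (hR : ∀ y, 0 ≤ R y) (hD : ∀ y, 0 ≤ D y)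
    (hsum : ∀ y, 0 < L y + R y + D y) (y : ι) :
    ‖((s / ((L y : ℂ) * s ^ 2 + (R y : ℂ) * s + (D y : ℂ))) /
        ∑ z, s / ((L z : ℂ) * s ^ 2 + (R z : ℂ) * s + (D z : ℂ)))‖ ≤
      (‖s‖ / s.re) *
        (‖(s / ((L y : ℂ) * s ^ 2 + (R y : ℂ) * s + (D y : ℂ)))‖ /
          ∑ z, ‖(s / ((L z : ℂ) * s ^ 2 + (R z : ℂ) * s + (D z : ℂ)))‖) :=
  abs_transition_le_check_general s hs L R D hL hR hD y
end

section
/- With the same setup and t > 0 real, |p_s(x,y)| ≤ (|s|/Re s)² · p_t(x,y) when t = |s|, where p_t(x,y) = ρ_t(x,y)/Σ_z ρ_t(x,z) is the stochastic kernel at the positive real parameter t = |s|. -/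
/-!
Dividing by `s`, the weight `ρ_s = s / (L s² + R s + D)` is the inverse of
`Z(s) = L s + R + D s⁻¹`, the impedance of a series RLC circuit of elastance `D`, so `ρ_s` is
its admittance. The triangle inequality gives `‖Z(s)‖ ≤ Z(|s|)`, and since
`Re (s⁻¹) = Re s / |s|²` and `R ≥ R Re s / |s|`, also `Re Z(s) ≥ (Re s / |s|) Z(|s|)`.
Inverting, `‖ρ_s‖ ≤ (|s| / Re s) ρ_{|s|}` and `Re ρ_s ≥ (Re s / |s|) ρ_{|s|}`; the first bounds
the numerator of `p_s`, the second (through `‖Σ ρ_s‖ ≥ Re Σ ρ_s`) its denominator.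
-/

open Finset

section Impedance

variable {L R D : ℝ}

theorem norm_impedance_le (hL : 0 ≤ L) (hR : 0 ≤ R) (hD : 0 ≤ D) (s : ℂ) :
    ‖(L : ℂ) * s + R + D * s⁻¹‖ ≤ L * ‖s‖ + R + D * ‖s‖⁻¹ := by
  calc ‖(L : ℂ) * s + R + D * s⁻¹‖ ≤ ‖(L : ℂ) * s‖ + ‖(R : ℂ)‖ + ‖(D : ℂ) * s⁻¹‖ :=
        norm_add₃_le
    _ = L * ‖s‖ + R + D * ‖s‖⁻¹ := by
        simp only [norm_mul, norm_inv, Complex.norm_real, Real.norm_of_nonneg hL,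
          Real.norm_of_nonneg hR, Real.norm_of_nonneg hD]

theorem re_impedance_ge (hR : 0 ≤ R) {s : ℂ} (hs : s ≠ 0) :
    s.re / ‖s‖ * (L * ‖s‖ + R + D * ‖s‖⁻¹) ≤ ((L : ℂ) * s + R + D * s⁻¹).re := by
  have ht : 0 < ‖s‖ := norm_pos_iff.mpr hs
  have hRre : R * (s.re / ‖s‖) ≤ R :=
    mul_le_of_le_one_right hR ((div_le_one ht).mpr (Complex.re_le_norm s))
  calc s.re / ‖s‖ * (L * ‖s‖ + R + D * ‖s‖⁻¹)
      = L * s.re + R * (s.re / ‖s‖) + D * (s.re / ‖s‖ ^ 2) := by field_simp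
    _ ≤ L * s.re + R + D * (s.re / ‖s‖ ^ 2) := by gcongr
    _ = ((L : ℂ) * s + R + D * s⁻¹).re := by
        simp only [Complex.add_re, Complex.re_ofReal_mul, Complex.ofReal_re, Complex.inv_re,
          Complex.normSq_eq_norm_sq]

end Impedance

theorem Complex.norm_inv_le_of_le_re {z : ℂ} {a : ℝ} (ha : 0 < a) (hz : a ≤ z.re) :
    ‖z⁻¹‖ ≤ a⁻¹ := by
  rw [norm_inv]
  exact inv_anti₀ ha (hz.trans (Complex.re_le_norm z))

theorem Complex.div_sq_le_re_inv {z : ℂ} {a r : ℝ} (ha : 0 < a) (hz : a ≤ z.re) (hr : ‖z‖ ≤ r) :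
    a / r ^ 2 ≤ z⁻¹.re := by
  have hz0 : 0 < ‖z‖ := ha.trans_le (hz.trans (Complex.re_le_norm z))
  rw [Complex.inv_re, Complex.normSq_eq_norm_sq]
  exact div_le_div₀ (ha.le.trans hz) hz (pow_pos hz0 2) (pow_le_pow_left₀ hz0.le hr 2)

theorem self_div_quadratic_eq_inv {K : Type*} [Field K] (L R D : K) {s : K} (hs : s ≠ 0) :
    s / (L * s ^ 2 + R * s + D) = (L * s + R + D * s⁻¹)⁻¹ := by
  field_simp

section Admittance

variable {L R D : ℝ} {s : ℂ}

theorem impedance_pos (hL : 0 ≤ L) (hR : 0 ≤ R) (hD : 0 ≤ D) (hLRD : 0 < L + R + D) {t : ℝ}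
    (ht : 0 < t) : 0 < L * t + R + D * t⁻¹ := by
  rcases hL.lt_or_eq with hL | rfl
  · positivity
  rcases hR.lt_or_eq with hR | rfl
  · positivity
  · rw [zero_add, zero_add] at hLRD
    positivity

theorem norm_admittance_le (hL : 0 ≤ L) (hR : 0 ≤ R) (hD : 0 ≤ D) (hLRD : 0 < L + R + D)
    (hs : 0 < s.re) :
    ‖s / (L * s ^ 2 + R * s + D)‖ ≤ ‖s‖ / s.re * (‖s‖ / (L * ‖s‖ ^ 2 + R * ‖s‖ + D)) := by
  have hs0 : s ≠ 0 := fun h => by simp [h] at hs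
  have ht : 0 < ‖s‖ := norm_pos_iff.mpr hs0
  have hZ := impedance_pos hL hR hD hLRD ht
  rw [self_div_quadratic_eq_inv _ _ _ hs0, self_div_quadratic_eq_inv _ _ _ ht.ne',
    ← inv_div, ← mul_inv]
  exact Complex.norm_inv_le_of_le_re (mul_pos (div_pos hs ht) hZ)
    (re_impedance_ge hR hs0)

theorem re_admittance_ge (hL : 0 ≤ L) (hR : 0 ≤ R) (hD : 0 ≤ D) (hLRD : 0 < L + R + D)
    (hs : 0 < s.re) :
    s.re / ‖s‖ * (‖s‖ / (L * ‖s‖ ^ 2 + R * ‖s‖ + D)) ≤ (s / (L * s ^ 2 + R * s + D)).re := by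
  have hs0 : s ≠ 0 := fun h => by simp [h] at hs
  have ht : 0 < ‖s‖ := norm_pos_iff.mpr hs0
  have hZ := impedance_pos hL hR hD hLRD ht
  rw [self_div_quadratic_eq_inv _ _ _ hs0, self_div_quadratic_eq_inv _ _ _ ht.ne']
  have := Complex.div_sq_le_re_inv (mul_pos (div_pos hs ht) hZ)
    (re_impedance_ge hR hs0) (norm_impedance_le hL hR hD s)
  convert this using 1
  field_simp

end Admittance

theorem norm_div_sum_le {ι : Type*} [Fintype ι] {a : ι → ℂ} {b : ι → ℝ} {c C : ℝ} (hc : 0 < c)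
    (hb : ∀ i, 0 < b i) (hnorm : ∀ i, ‖a i‖ ≤ C * b i) (hre : ∀ i, c * b i ≤ (a i).re) (y : ι) :
    ‖a y / ∑ i, a i‖ ≤ C / c * (b y / ∑ i, b i) := by
  have hsum : c * ∑ i, b i ≤ ‖∑ i, a i‖ :=
    calc c * ∑ i, b i = ∑ i, c * b i := mul_sum _ _ _
      _ ≤ ∑ i, (a i).re := sum_le_sum fun i _ => hre i
      _ = (∑ i, a i).re := (Complex.re_sum _ _).symm
      _ ≤ ‖∑ i, a i‖ := Complex.re_le_norm _
  have hpos : 0 < c * ∑ i, b i := mul_pos hc (sum_pos (fun i _ => hb i) ⟨y, mem_univ y⟩)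
  calc ‖a y / ∑ i, a i‖ = ‖a y‖ / ‖∑ i, a i‖ := norm_div _ _
    _ ≤ C * b y / (c * ∑ i, b i) :=
        div_le_div₀ ((norm_nonneg _).trans (hnorm y)) (hnorm y) hpos hsum
    _ = C / c * (b y / ∑ i, b i) := by rw [mul_div_mul_comm]

/-- |p_s(x,y)| ≤ (|s|/Re s)²·p_{|s|}(x,y), where p_{|s|} is the stochastic
kernel at the positive real parameter t = |s|. -/
theorem abs_transition_le_sq (s : ℂ) (hs : 0 < s.re) {ι : Type*} [Fintype ι]
    (L R D : ι → ℝ) (hL : ∀ y, 0 ≤ L y) (hR : ∀ y, 0 ≤ R y) (hD : ∀ y, 0 ≤ D y)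
    (hsum : ∀ y, 0 < L y + R y + D y) (y : ι) :
    ‖((s / ((L y : ℂ) * s ^ 2 + (R y : ℂ) * s + (D y : ℂ))) /
        ∑ z, s / ((L z : ℂ) * s ^ 2 + (R z : ℂ) * s + (D z : ℂ)))‖ ≤
      (‖s‖ / s.re) ^ 2 *
        ((‖s‖ / (L y * ‖s‖ ^ 2 + R y * ‖s‖ + D y)) /
          ∑ z, ‖s‖ / (L z * ‖s‖ ^ 2 + R z * ‖s‖ + D z)) := by
  have ht : 0 < ‖s‖ := hs.trans_le (Complex.re_le_norm s)
  have hbound := norm_div_sum_le (div_pos hs ht)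
    (fun z => by
      rw [self_div_quadratic_eq_inv _ _ _ ht.ne']
      exact inv_pos.mpr (impedance_pos (hL z) (hR z) (hD z) (hsum z) ht))
    (fun z => norm_admittance_le (hL z) (hR z) (hD z) (hsum z) hs)
    (fun z => re_admittance_ge (hL z) (hR z) (hD z) (hsum z) hs) y
  convert hbound using 2
  field_simp
end

section
/- For s ∈ ℂ with Re s > 0 and a single edge with parameters L, R, D ≥ 0 (sum > 0), one has Re ρ_s ≥ (Re s / max{1, |s|²}) · ρ_1, where ρ_s = s/(L s² + R s + D) and ρ_1 = 1/(L + R + D). -/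
/-!
For `s ≠ 0` we have `ρ_s = (L s + R + D s⁻¹)⁻¹`. With `c = Re s / |s|`, the sector
`{z | c |z| ≤ Re z}` is a convex cone containing `s`, `1` and `s⁻¹`, and it is stable under
inversion; hence `Re ρ_s ≥ c |ρ_s|`. The triangle inequality gives
`|ρ_s| ≥ |s| / (L |s|² + R |s| + D)`, and `L r² + R r + D ≤ max 1 r² · (L + R + D)` finishes.
-/

theorem add_mul_add_mul_pos {L R D a b c : ℝ} (hL : 0 ≤ L) (hR : 0 ≤ R) (hD : 0 ≤ D)
    (hsum : 0 < L + R + D) (ha : 0 < a) (hb : 0 < b) (hc : 0 < c) :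
    0 < L * a + R * b + D * c := by
  have := mul_nonneg hL ha.le
  have := mul_nonneg hR hb.le
  have := mul_nonneg hD hc.le
  obtain hL' | hR' | hD' : 0 < L ∨ 0 < R ∨ 0 < D := by contrapose! hsum; linarith
  · linarith [mul_pos hL' ha]
  · linarith [mul_pos hR' hb]
  · linarith [mul_pos hD' hc]

theorem mul_sq_add_mul_add_le_max_one_sq_mul {L R D r : ℝ} (hL : 0 ≤ L) (hR : 0 ≤ R)
    (hD : 0 ≤ D) (hr : 0 ≤ r) : L * r ^ 2 + R * r + D ≤ max 1 (r ^ 2) * (L + R + D) := by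
  have hsq : r ^ 2 ≤ max 1 (r ^ 2) := le_max_right _ _
  have hone : 1 ≤ max 1 (r ^ 2) := le_max_left _ _
  have hlin : r ≤ max 1 (r ^ 2) := by
    rcases le_total r 1 with h | h
    · linarith
    · nlinarith
  nlinarith [mul_le_mul_of_nonneg_left hsq hL, mul_le_mul_of_nonneg_left hlin hR,
    mul_le_mul_of_nonneg_left hone hD]

namespace Complex

section Sector

variable {c : ℝ} {z w : ℂ}

theorem mul_norm_le_re_add (hc : 0 ≤ c) (hz : c * ‖z‖ ≤ z.re) (hw : c * ‖w‖ ≤ w.re) :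
    c * ‖z + w‖ ≤ (z + w).re :=
  calc c * ‖z + w‖ ≤ c * ‖z‖ + c * ‖w‖ := by rw [← mul_add]; gcongr; exact norm_add_le z w
    _ ≤ (z + w).re := by rw [add_re]; linarith

theorem mul_norm_le_re_ofReal_mul {a : ℝ} (ha : 0 ≤ a) (hz : c * ‖z‖ ≤ z.re) :
    c * ‖(a : ℂ) * z‖ ≤ ((a : ℂ) * z).re := by
  rw [norm_mul, norm_real, Real.norm_of_nonneg ha, re_ofReal_mul, mul_left_comm]
  exact mul_le_mul_of_nonneg_left hz ha

theorem mul_norm_le_re_inv (hz : c * ‖z‖ ≤ z.re) : c * ‖z⁻¹‖ ≤ z⁻¹.re := by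
  rcases eq_or_ne z 0 with rfl | hz0
  · simp
  have hpos : 0 < ‖z‖ := norm_pos_iff.2 hz0
  rw [inv_re, norm_inv, normSq_eq_norm_sq]
  calc c * ‖z‖⁻¹ = c * ‖z‖ / ‖z‖ ^ 2 := by field_simp
    _ ≤ z.re / ‖z‖ ^ 2 := by gcongr

end Sector

theorem re_div_norm_mul_norm_le_re_inv_add (s : ℂ) (hs : 0 ≤ s.re) {L R D : ℝ}
    (hL : 0 ≤ L) (hR : 0 ≤ R) (hD : 0 ≤ D) :
    s.re / ‖s‖ * ‖(L * s + R + D * s⁻¹)⁻¹‖ ≤ (L * s + R + D * s⁻¹)⁻¹.re := by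
  set c := s.re / ‖s‖
  have hc : 0 ≤ c := div_nonneg hs (norm_nonneg s)
  have h_s : c * ‖s‖ ≤ s.re := (div_mul_cancel_of_imp fun h ↦ by simp_all).le
  have h_one : c * ‖(1 : ℂ)‖ ≤ (1 : ℂ).re := by
    simpa using div_le_one_of_le₀ (re_le_norm s) (norm_nonneg s)
  have h_R := mul_norm_le_re_ofReal_mul hR h_one
  rw [mul_one] at h_R
  refine mul_norm_le_re_inv (mul_norm_le_re_add hc (mul_norm_le_re_add hc ?_ h_R) ?_)
  · exact mul_norm_le_re_ofReal_mul hL h_s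
  · exact mul_norm_le_re_ofReal_mul hD (mul_norm_le_re_inv h_s)

end Complex

open Complex

noncomputable def admittance (L R D : ℝ) (s : ℂ) : ℂ := s / (L * s ^ 2 + R * s + D)

section Admittance

variable {L R D : ℝ} {s : ℂ}

theorem admittance_eq_inv (hs : s ≠ 0) : admittance L R D s = (L * s + R + D * s⁻¹)⁻¹ := by
  rw [admittance, ← inv_div]
  congr 1
  field_simp

theorem re_div_norm_mul_norm_admittance_le_re (hs : 0 < s.re) (hL : 0 ≤ L) (hR : 0 ≤ R)
    (hD : 0 ≤ D) : s.re / ‖s‖ * ‖admittance L R D s‖ ≤ (admittance L R D s).re := by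
  rw [admittance_eq_inv (fun h ↦ by simp [h] at hs)]
  exact re_div_norm_mul_norm_le_re_inv_add s hs.le hL hR hD

theorem div_le_norm_admittance (hs : 0 < s.re) (hL : 0 ≤ L) (hR : 0 ≤ R) (hD : 0 ≤ D)
    (hsum : 0 < L + R + D) :
    ‖s‖ / (L * ‖s‖ ^ 2 + R * ‖s‖ + D) ≤ ‖admittance L R D s‖ := by
  have hs0 : s ≠ 0 := fun h ↦ by simp [h] at hs
  set w : ℂ := L * s ^ 2 + R * s + D
  have hz : 0 < (L * s + R + D * s⁻¹).re := by
    have := add_mul_add_mul_pos hL hR hD hsum hs one_pos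
      (div_pos hs (normSq_pos.2 hs0))
    simpa [inv_re] using this
  have hw : w = s * (L * s + R + D * s⁻¹) := by
    field_simp
    ring
  have hw0 : w ≠ 0 := by
    rw [hw]
    exact mul_ne_zero hs0 fun h ↦ by simp [h] at hz
  have hw_le : ‖w‖ ≤ L * ‖s‖ ^ 2 + R * ‖s‖ + D := by
    refine (norm_add₃_le ..).trans_eq ?_
    simp [norm_pow, abs_of_nonneg hL, abs_of_nonneg hR, abs_of_nonneg hD]
  rw [admittance, norm_div]
  exact div_le_div_of_nonneg_left (norm_nonneg s) (norm_pos_iff.2 hw0) hw_le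

end Admittance

/-- Re ρ_s ≥ (Re s / max{1,|s|²})·ρ_1, where ρ_s = s/(L s² + R s + D) and
ρ_1 = 1/(L + R + D). -/
theorem admittance_re_ge (s : ℂ) (hs : 0 < s.re) (L R D : ℝ)
    (hL : 0 ≤ L) (hR : 0 ≤ R) (hD : 0 ≤ D) (hsum : 0 < L + R + D) :
    (s.re / max 1 (‖s‖ ^ 2)) * (1 / (L + R + D)) ≤
      (s / ((L : ℂ) * s ^ 2 + (R : ℂ) * s + (D : ℂ))).re := by
  have hr : 0 < ‖s‖ := norm_pos_iff.2 fun h ↦ by simp [h] at hs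
  have hQ : 0 < L * ‖s‖ ^ 2 + R * ‖s‖ + D := by
    simpa using add_mul_add_mul_pos hL hR hD hsum (pow_pos hr 2) hr one_pos
  calc (s.re / max 1 (‖s‖ ^ 2)) * (1 / (L + R + D))
      = s.re / (max 1 (‖s‖ ^ 2) * (L + R + D)) := by rw [div_mul_div_comm, mul_one]
    _ ≤ s.re / (L * ‖s‖ ^ 2 + R * ‖s‖ + D) := by
      gcongr
      exact mul_sq_add_mul_add_le_max_one_sq_mul hL hR hD hr.le
    _ = s.re / ‖s‖ * (‖s‖ / (L * ‖s‖ ^ 2 + R * ‖s‖ + D)) := by field_simp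
    _ ≤ s.re / ‖s‖ * ‖admittance L R D s‖ := by
      gcongr
      exact div_le_norm_admittance hs hL hR hD hsum
    _ ≤ (admittance L R D s).re := re_div_norm_mul_norm_admittance_le_re hs hL hR hD
end
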